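/- A fan quadruple (𝔛, !𝔅, *ℭ, !*ℌ) is partially-sorted if and only if for every (𝔅 ∪ ℌ)-unsettled cone ξ ∈ 𝔛 there exists a face ζ of ξ such that the set of rays of ξ lying in 𝔄 is exactly the set of all rays of ζ. -/
import Mathlib


namespace ToricPaper

open scoped BigOperators

/-- The ambient space `N_ℚ = ℚ^n`. -/
abbrev V (n : ℕ) := Fin n → ℚ

variable {n : ℕ}

/-- The cone of nonnegative rational combinations of elements of `A`. -/
def coneHull (A : Set (V n)) : Set (V n) :=
  {x | ∃ t : Finset (V n), ↑t ⊆ A ∧ ∃ c : V n → ℚ,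
    (∀ v ∈ t, 0 ≤ c v) ∧ x = ∑ v ∈ t, c v • v}

/-- A rational polyhedral cone: the cone generated by finitely many vectors. -/
def IsPolyCone (σ : Set (V n)) : Prop := ∃ S : Finset (V n), σ = coneHull (S : Set (V n))

/-- A cone is strongly convex if it contains no line. -/
def StronglyConvex (σ : Set (V n)) : Prop := ∀ x ∈ σ, -x ∈ σ → x = 0

/-- `F` is a face of `σ`, cut out by a linear functional nonnegative on `σ`. -/
def IsFaceOf (F σ : Set (V n)) : Prop :=
  ∃ m : (V n) →ₗ[ℚ] ℚ, (∀ x ∈ σ, 0 ≤ m x) ∧ F = {x ∈ σ | m x = 0}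

/-- Dimension of a cone: the rank of its linear span. -/
noncomputable def coneDim (σ : Set (V n)) : ℕ := Module.finrank ℚ (Submodule.span ℚ σ)

/-- A ray of a cone is a one-dimensional face. -/
def IsRayOf (ν σ : Set (V n)) : Prop := IsFaceOf ν σ ∧ coneDim ν = 1

/-- An abstract ray: a one-dimensional strongly convex rational polyhedral cone. -/
def IsRay (ν : Set (V n)) : Prop := IsPolyCone ν ∧ StronglyConvex ν ∧ coneDim ν = 1

/-- All faces of a cone `τ` (the affine fan induced by `τ`). -/
def faces (τ : Set (V n)) : Set (Set (V n)) := {F | IsFaceOf F τ}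

/-- The rays of a cone `τ`. -/
def raysOf (τ : Set (V n)) : Set (Set (V n)) := {ν | IsRayOf ν τ}

/-- A fan: a finite collection of strongly convex rational polyhedral cones, closed under
taking faces, such that the intersection of two cones is a face of each. -/
def IsFan (X : Set (Set (V n))) : Prop :=
  X.Finite ∧ (∀ σ ∈ X, IsPolyCone σ ∧ StronglyConvex σ) ∧
  (∀ σ ∈ X, ∀ F, IsFaceOf F σ → F ∈ X) ∧
  (∀ σ ∈ X, ∀ σ' ∈ X, IsFaceOf (σ ∩ σ') σ ∧ IsFaceOf (σ ∩ σ') σ')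

/-- The rays (one-dimensional cones) belonging to a collection of cones. -/
def raysIn (X : Set (Set (V n))) : Set (Set (V n)) := {ν | ν ∈ X ∧ coneDim ν = 1}

/-- The support of a collection of cones. -/
def support (X : Set (Set (V n))) : Set (V n) := ⋃₀ X

/-- The data of a fan quadruple `(X, !B, *C, !*H)`: three pairwise disjoint sets of rays. -/
def IsQuadData (X B C H : Set (Set (V n))) : Prop :=
  B ⊆ raysIn X ∧ C ⊆ raysIn X ∧ H ⊆ raysIn X ∧ Disjoint B C ∧ Disjoint B H ∧ Disjoint C H

/-- The data of a fan triple `(X, !B, *C)`: two disjoint sets of rays. -/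
def IsTripleData (X B C : Set (Set (V n))) : Prop :=
  B ⊆ raysIn X ∧ C ⊆ raysIn X ∧ Disjoint B C

/-- `ρ` is a sorting function for the (restricted) quadruple on the faces of `ξ`:
nonnegative on rays of `ξ` in `B`, nonpositive on rays of `ξ` in `C`, zero on rays of `ξ`
in none of `B`, `C`, `H`. -/
def IsSortingOn (ξ : Set (V n)) (B C H : Set (Set (V n))) (ρ : (V n) →ₗ[ℚ] ℚ) : Prop :=
  (∀ ν, IsRayOf ν ξ → ν ∈ B → ∀ x ∈ ν, 0 ≤ ρ x) ∧
  (∀ ν, IsRayOf ν ξ → ν ∈ C → ∀ x ∈ ν, ρ x ≤ 0) ∧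
  (∀ ν, IsRayOf ν ξ → ν ∉ B → ν ∉ C → ν ∉ H → ∀ x ∈ ν, ρ x = 0)

/-- The (restricted) affine quadruple on the faces of `ξ` admits a `Cf`-strict sorting
function: a sorting function which is moreover negative on `ν ∖ {0}` for every `ν ∈ Cf`. -/
def HasStrictSortingOn (ξ : Set (V n)) (B C H Cf : Set (Set (V n))) : Prop :=
  ∃ ρ : (V n) →ₗ[ℚ] ℚ, IsSortingOn ξ B C H ρ ∧
    ∀ ν, IsRayOf ν ξ → ν ∈ Cf → ∀ x ∈ ν, x ≠ 0 → ρ x < 0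

/-- A cone `ξ` is `E`-unsettled if no ray of `ξ` lies in `E`. -/
def Unsettled (E : Set (Set (V n))) (ξ : Set (V n)) : Prop := ∀ ν, IsRayOf ν ξ → ν ∉ E

/-- The quadruple `(X, !B, *C, !*H)` is `(Bs, Cf, Hs)`-sorted. -/
def SortedOn (X B C H Bs Cf Hs : Set (Set (V n))) : Prop :=
  ∀ ξ ∈ X, Unsettled ((B \ Bs) ∪ (H \ Hs)) ξ → HasStrictSortingOn ξ B C H Cf

/-- Partially-sorted: `(∅, C, ∅)`-sorted. -/
def PartiallySortedOn (X B C H : Set (Set (V n))) : Prop := SortedOn X B C H ∅ C ∅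

/-- Well-sorted: `(B, C, H)`-sorted. -/
def WellSortedOn (X B C H : Set (Set (V n))) : Prop := SortedOn X B C H B C H

/-- A simplicial cone is generated by linearly independent vectors. -/
def IsSimplicialCone (σ : Set (V n)) : Prop :=
  ∃ S : Finset (V n), LinearIndependent ℚ (fun v : S => (v : V n)) ∧
    σ = coneHull (S : Set (V n))

/-- A collection of cones is `E`-simplicial: every cone having a ray of `E` as a face is the
join of that ray with a cone of the collection of one less dimension. -/
def ESimplicialOn (X E : Set (Set (V n))) : Prop :=
  ∀ ν ∈ E, ∀ σ ∈ X, IsFaceOf ν σ →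
    ∃ ζ ∈ X, σ = coneHull (ζ ∪ ν) ∧ coneDim σ = coneDim ζ + 1

/-- A subdivision of a fan: a fan with the same support, every cone of which is contained in
a cone of the base. -/
def IsSubdivision (X' X : Set (Set (V n))) : Prop :=
  IsFan X' ∧ support X' = support X ∧ ∀ σ' ∈ X', ∃ σ ∈ X, σ' ⊆ σ

/-- A subdivision is efficient if it introduces no new rays. -/
def IsEfficient (X' X : Set (Set (V n))) : Prop := raysIn X' = raysIn X

/-- `ψ` is a good (convex piecewise-linear) function for the subdivision `X'` relative to the
cones of the base fan `X`: on each cone `τ` of `X`, `ψ` is convex, linear on each cone of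
`X'` contained in `τ`, and the maximal subcones of linearity of `ψ` inside `τ` are exactly
the cones of `X'` (i.e. any convex subset of `τ` on which `ψ` is linear lies in one of them). -/
def IsGoodFor (X X' : Set (Set (V n))) (ψ : V n → ℚ) : Prop :=
  ∀ τ ∈ X, ConvexOn ℚ τ ψ ∧
    (∀ σ' ∈ X', σ' ⊆ τ → ∃ m : (V n) →ₗ[ℚ] ℚ, ∀ x ∈ σ', ψ x = m x) ∧
    (∀ (m : (V n) →ₗ[ℚ] ℚ) (t : Set (V n)), t ⊆ τ → Convex ℚ t →
      (∀ x ∈ t, ψ x = m x) → ∃ σ' ∈ X', σ' ⊆ τ ∧ t ⊆ σ')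

/-- Sign conditions of a good sorting function with respect to the quadruple data on `X'`. -/
def SignedOn (X' B' C' H' : Set (Set (V n))) (ψ : V n → ℚ) : Prop :=
  (∀ ν ∈ B', ∀ x ∈ ν, 0 ≤ ψ x) ∧ (∀ ν ∈ C', ∀ x ∈ ν, ψ x ≤ 0) ∧
  (∀ ν ∈ raysIn X', ν ∉ B' → ν ∉ C' → ν ∉ H' → ∀ x ∈ ν, ψ x = 0)

/-- Sign conditions restricted to the rays contained in a cone `τ`. -/
def SignedOnIn (τ : Set (V n)) (X' B' C' H' : Set (Set (V n))) (ψ : V n → ℚ) : Prop :=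
  (∀ ν ∈ B', ν ⊆ τ → ∀ x ∈ ν, 0 ≤ ψ x) ∧ (∀ ν ∈ C', ν ⊆ τ → ∀ x ∈ ν, ψ x ≤ 0) ∧
  (∀ ν ∈ raysIn X', ν ⊆ τ → ν ∉ B' → ν ∉ C' → ν ∉ H' → ∀ x ∈ ν, ψ x = 0)

/-- A convex subdivision, with respect to a fan quadruple structure on `X'`. -/
def IsConvexSubdiv (X' X B' C' H' : Set (Set (V n))) : Prop :=
  IsSubdivision X' X ∧ ∃ ψ : V n → ℚ, IsGoodFor X X' ψ ∧ SignedOn X' B' C' H' ψ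

/-- A locally-convex subdivision: for each cone of the base there is a good sorting function
on that cone. -/
def IsLocallyConvexSubdiv (X' X B' C' H' : Set (Set (V n))) : Prop :=
  IsSubdivision X' X ∧
    ∀ τ ∈ X, ∃ ψ : V n → ℚ, IsGoodFor {τ} X' ψ ∧ SignedOnIn τ X' B' C' H' ψ

/-- Star subdivision of `X` at a ray `ν` contained in the support of `X`. -/
def starSubdiv (X : Set (Set (V n))) (ν : Set (V n)) : Set (Set (V n)) :=
  {σ | σ ∈ X ∧ ¬ ν ⊆ σ} ∪
  {τ | ∃ σ ∈ X, ν ⊆ σ ∧ ∃ ξ, IsFaceOf ξ σ ∧ ¬ ν ⊆ ξ ∧ τ = coneHull (ξ ∪ ν)}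

/-- The set `S` of facets used in the extension construction `Ext(𝔗, ν)`. -/
noncomputable def extS (τ ν : Set (V n)) : Set (Set (V n)) :=
  if coneDim (coneHull (τ ∪ ν)) = coneDim τ + 1 then {τ}
  else {ζ | (IsFaceOf ζ τ ∧ coneDim ζ + 1 = coneDim τ) ∧
    ∃ m : (V n) →ₗ[ℚ] ℚ, (∀ x ∈ ζ, m x = 0) ∧ (∃ v ∈ ν, v ≠ 0 ∧ m v = -1) ∧
      ∀ x ∈ τ, x ∉ ζ → 0 < m x}

/-- All faces of cones of `extS τ ν`. -/
noncomputable def extFaces (τ ν : Set (V n)) : Set (Set (V n)) :=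
  {ξ | ∃ ζ ∈ extS τ ν, IsFaceOf ξ ζ}

/-- The extension `Ext(𝔗, ν)` of the affine fan of `τ` by the ray `ν`. -/
noncomputable def Ext (τ ν : Set (V n)) : Set (Set (V n)) :=
  {ν} ∪ faces τ ∪ (fun ξ => coneHull (ξ ∪ ν)) '' extFaces τ ν

/-- The extension `Ext(𝔗', ν)` of a subdivision `𝒯'` of the affine fan of `τ` by the ray
`ν`. -/
noncomputable def ExtSub (T' : Set (Set (V n))) (τ ν : Set (V n)) : Set (Set (V n)) :=
  {ν} ∪ T' ∪ (fun ξ => coneHull (ξ ∪ ν)) ''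
    {ξ | ∃ ζ' ∈ T', (∃ ζ ∈ extS τ ν, ζ' ⊆ ζ) ∧ IsFaceOf ξ ζ'}

/-- Sequential convexity of a sequence of star subdivisions (the list gives the rays in the
order in which the star subdivisions are performed). -/
def SeqConvex (B C H : Set (Set (V n))) : Set (Set (V n)) → List (Set (V n)) → Prop
  | _, [] => True
  | X, ν :: rest =>
      IsLocallyConvexSubdiv (starSubdiv X ν) X B C H ∧
      SeqConvex B C H (starSubdiv X ν) rest


section Aux

open Module Submodule

variable {n : ℕ}

lemma coneHull_zero_mem (A : Set (V n)) : (0 : V n) ∈ coneHull A := by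
  exact ⟨∅, by simp, fun _ => 0, by simp, by simp⟩

lemma subset_coneHull (A : Set (V n)) : A ⊆ coneHull A := by
  intro a ha
  refine ⟨{a}, by simpa using ha, fun _ => 1, by simp, by simp⟩

lemma coneHull_add {A : Set (V n)} {x y : V n} (hx : x ∈ coneHull A) (hy : y ∈ coneHull A) :
    x + y ∈ coneHull A := by
  obtain ⟨s, hs, c, hc, hxs⟩ := hx
  obtain ⟨t, ht, d, hd, hyt⟩ := hy
  classical
  refine ⟨s ∪ t, by simp [Set.union_subset_iff, hs, ht], 
    fun v => (if v ∈ s then c v else 0) + (if v ∈ t then d v else 0), ?_, ?_⟩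
  · intro v hv
    have h1 : (0:ℚ) ≤ if v ∈ s then c v else 0 := by split <;> simp_all [hc]
    have h2 : (0:ℚ) ≤ if v ∈ t then d v else 0 := by split <;> simp_all [hd]
    exact add_nonneg h1 h2
  · have e1 : ∑ v ∈ s ∪ t, (if v ∈ s then c v else 0) • v = ∑ v ∈ s, c v • v := by
      rw [← Finset.sum_subset (Finset.subset_union_left (s₂ := t))]
      · exact Finset.sum_congr rfl (fun v hv => by simp [hv])
      · intro v _ hv; simp [hv]
    have e2 : ∑ v ∈ s ∪ t, (if v ∈ t then d v else 0) • v = ∑ v ∈ t, d v • v := by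
      rw [← Finset.sum_subset (Finset.subset_union_right (s₁ := s))]
      · exact Finset.sum_congr rfl (fun v hv => by simp [hv])
      · intro v _ hv; simp [hv]
    simp only [add_smul, Finset.sum_add_distrib, e1, e2, hxs, hyt]

lemma coneHull_smul {A : Set (V n)} {r : ℚ} {x : V n} (hr : 0 ≤ r) (hx : x ∈ coneHull A) :
    r • x ∈ coneHull A := by
  obtain ⟨s, hs, c, hc, hxs⟩ := hx
  refine ⟨s, hs, fun v => r * c v, fun v hv => mul_nonneg hr (hc v hv), ?_⟩
  rw [hxs, Finset.smul_sum]
  exact Finset.sum_congr rfl (fun v hv => by rw [smul_smul])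

lemma coneHull_min {A B : Set (V n)} (h : ∀ a ∈ A, a ∈ coneHull B) :
    coneHull A ⊆ coneHull B := by
  intro x hx
  obtain ⟨s, hs, c, hc, hxs⟩ := hx
  rw [hxs]
  refine Finset.sum_induction _ (· ∈ coneHull B) (fun a b ha hb => coneHull_add ha hb)
    (coneHull_zero_mem B) (fun v hv => coneHull_smul (hc v hv) (h v (hs hv)))

lemma linear_nonneg_coneHull {A : Set (V n)} {m : (V n) →ₗ[ℚ] ℚ}
    (h : ∀ a ∈ A, 0 ≤ m a) : ∀ x ∈ coneHull A, 0 ≤ m x := by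
  intro x ⟨s, hs, c, hc, hxs⟩
  rw [hxs, map_sum]
  exact Finset.sum_nonneg fun v hv => by
    rw [map_smul]; exact mul_nonneg (hc v hv) (h v (hs hv))

lemma linear_nonpos_coneHull {A : Set (V n)} {m : (V n) →ₗ[ℚ] ℚ}
    (h : ∀ a ∈ A, m a ≤ 0) : ∀ x ∈ coneHull A, m x ≤ 0 := by
  intro x hx
  have := linear_nonneg_coneHull (m := -m) (fun a ha => by simpa using h a ha) x hx
  simpa using this


lemma mem_coneHull_insert {A : Set (V n)} {v x : V n} :
    x ∈ coneHull (insert v A) ↔ ∃ y ∈ coneHull A, ∃ t : ℚ, 0 ≤ t ∧ x = y + t • v := by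
  classical
  constructor
  · rintro ⟨s, hs, c, hc, hxs⟩
    refine ⟨∑ u ∈ s.erase v, c u • u, ⟨s.erase v, ?_, c, fun u hu => hc u (Finset.mem_of_mem_erase hu), rfl⟩,
      if v ∈ s then c v else 0, by split <;> simp_all, ?_⟩
    · intro u hu
      have hu' := Finset.mem_coe.mp hu
      have := hs (Finset.mem_coe.mpr (Finset.mem_of_mem_erase hu'))
      rcases this with h | h
      · exact absurd h (Finset.ne_of_mem_erase hu')
      · exact h
    · by_cases hvs : v ∈ s
      · simp only [hvs, if_true]
        rw [hxs, ← Finset.add_sum_erase _ _ hvs, add_comm]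
      · simp only [hvs, if_false, zero_smul, add_zero]
        rw [hxs, Finset.erase_eq_of_notMem hvs]
  · rintro ⟨y, ⟨s, hs, c, hc, hys⟩, t, ht, hx⟩
    refine ⟨insert v s, ?_, fun u => (if u ∈ s then c u else 0) + (if u = v then t else 0), ?_, ?_⟩
    · intro u hu
      rcases Finset.mem_insert.mp (Finset.mem_coe.mp hu) with h | h
      · exact h ▸ Set.mem_insert v A
      · exact Set.mem_insert_of_mem v (hs (Finset.mem_coe.mpr h))
    · intro u _
      have h1 : (0:ℚ) ≤ if u ∈ s then c u else 0 := by split <;> simp_all [hc]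
      have h2 : (0:ℚ) ≤ if u = v then t else 0 := by split <;> simp_all
      exact add_nonneg h1 h2
    · have e1 : ∑ u ∈ insert v s, (if u ∈ s then c u else 0) • u = ∑ u ∈ s, c u • u := by
        rw [← Finset.sum_subset (Finset.subset_insert v s)]
        · exact Finset.sum_congr rfl (fun u hu => by simp [hu])
        · intro u _ hu; simp [hu]
      have e2 : ∑ u ∈ insert v s, (if u = v then t else 0) • u = t • v := by
        rw [Finset.sum_eq_single v]
        · simp
        · intro u _ hu; simp [hu]
        · intro h; exact absurd (Finset.mem_insert_self v s) h
      simp only [add_smul, Finset.sum_add_distrib, e1, e2, hx, hys]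

/-- Weyl's theorem: a finitely generated cone is an intersection of half-spaces. -/
lemma weyl (S : Finset (V n)) : ∃ M : Finset ((V n) →ₗ[ℚ] ℚ),
    coneHull (S : Set (V n)) = {x | ∀ m ∈ M, 0 ≤ m x} := by
  classical
  induction S using Finset.induction with
  | empty =>
    refine ⟨(Finset.univ.image fun i : Fin n => (LinearMap.proj i : (V n) →ₗ[ℚ] ℚ)) ∪
      (Finset.univ.image fun i : Fin n => -(LinearMap.proj i : (V n) →ₗ[ℚ] ℚ)), ?_⟩
    ext x
    simp only [Finset.coe_empty, Set.mem_setOf_eq, Finset.mem_union, Finset.mem_image,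
      Finset.mem_univ, true_and]
    constructor
    · rintro ⟨s, hs, c, hc, hxs⟩
      have : s = ∅ := Finset.subset_empty.mp (by simpa using hs)
      subst this
      simp only [Finset.sum_empty] at hxs
      subst hxs
      rintro m (⟨i, rfl⟩ | ⟨i, rfl⟩) <;> simp
    · intro h
      have hx : x = 0 := by
        funext i
        have h1 := h (LinearMap.proj i) (Or.inl ⟨i, rfl⟩)
        have h2 := h (-(LinearMap.proj i : (V n) →ₗ[ℚ] ℚ)) (Or.inr ⟨i, rfl⟩)
        simp only [LinearMap.proj_apply, LinearMap.neg_apply] at h1 h2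
        have : x i = 0 := le_antisymm (by linarith) h1
        simpa using this
      rw [hx]; exact coneHull_zero_mem _
  | @insert v S' hv ih =>
    obtain ⟨M', hM'⟩ := ih
    set Mz := M'.filter (fun m => m v = 0) with hMz
    set Mp := M'.filter (fun m => 0 < m v) with hMp
    set Mn := M'.filter (fun m => m v < 0) with hMn
    refine ⟨Mz ∪ Mp ∪ (Mn ×ˢ Mp).image (fun p => (p.2 v) • p.1 - (p.1 v) • p.2), ?_⟩
    ext x
    simp only [Set.mem_setOf_eq]
    constructor
    · intro hx
      rw [Finset.coe_insert] at hx
      obtain ⟨y, hy, t, ht, rfl⟩ := mem_coneHull_insert.mp hx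
      have hy' : ∀ m ∈ M', 0 ≤ m y := by rw [hM'] at hy; exact hy
      intro m hm
      rcases Finset.mem_union.mp hm with hm1 | hm2
      · rcases Finset.mem_union.mp hm1 with hmz | hmp
        · obtain ⟨hmM, hmv⟩ := Finset.mem_filter.mp hmz
          simp only [map_add, map_smul, smul_eq_mul, hmv, mul_zero, add_zero]
          exact hy' m hmM
        · obtain ⟨hmM, hmv⟩ := Finset.mem_filter.mp hmp
          simp only [map_add, map_smul, smul_eq_mul]
          exact add_nonneg (hy' m hmM) (mul_nonneg ht (le_of_lt hmv))
      · obtain ⟨⟨m1, m2⟩, hp, rfl⟩ := Finset.mem_image.mp hm2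
        obtain ⟨h1, h2⟩ := Finset.mem_product.mp hp
        obtain ⟨h1M, h1v⟩ := Finset.mem_filter.mp h1
        obtain ⟨h2M, h2v⟩ := Finset.mem_filter.mp h2
        simp only [LinearMap.sub_apply, LinearMap.smul_apply, map_add, map_smul, smul_eq_mul]
        have t1 : 0 ≤ m2 v * m1 y := mul_nonneg (le_of_lt h2v) (hy' m1 h1M)
        have t2 : m1 v * m2 y ≤ 0 := mul_nonpos_of_nonpos_of_nonneg (le_of_lt h1v) (hy' m2 h2M)
        nlinarith
    · intro hx
      set T : Finset ℚ := insert (0:ℚ) (Mn.image fun m => m x / m v) with hT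
      have hTne : T.Nonempty := Finset.insert_nonempty _ _
      set t := T.max' hTne with htdef
      have ht0 : 0 ≤ t := Finset.le_max' T 0 (Finset.mem_insert_self _ _)
      have hub : ∀ m ∈ Mn, m x / m v ≤ t := fun m hm =>
        Finset.le_max' T _ (Finset.mem_insert_of_mem (Finset.mem_image_of_mem _ hm))
      have hmem : x - t • v ∈ coneHull (S' : Set (V n)) := by
        rw [hM']
        intro m hm
        rcases lt_trichotomy (m v) 0 with hmv | hmv | hmv
        · have := hub m (Finset.mem_filter.mpr ⟨hm, hmv⟩)
          have h2 : t * m v ≤ (m x / m v) * m v :=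
            (mul_le_mul_right_of_neg hmv).mpr this
          rw [div_mul_cancel₀ _ (ne_of_lt hmv)] at h2
          simp only [map_sub, map_smul, smul_eq_mul]
          linarith
        · have hz := hx m (Finset.mem_union.mpr (Or.inl (Finset.mem_union.mpr
            (Or.inl (Finset.mem_filter.mpr ⟨hm, hmv⟩)))))
          simp only [map_sub, map_smul, smul_eq_mul, hmv, mul_zero, sub_zero]
          exact hz
        · -- m v > 0 : need t ≤ m x / m v
          have hub2 : ∀ r ∈ T, r ≤ m x / m v := by
            intro r hr
            rcases Finset.mem_insert.mp hr with rfl | hr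
            · have := hx m (Finset.mem_union.mpr (Or.inl (Finset.mem_union.mpr
                (Or.inr (Finset.mem_filter.mpr ⟨hm, hmv⟩)))))
              positivity
            · obtain ⟨m1, hm1, rfl⟩ := Finset.mem_image.mp hr
              obtain ⟨h1M, h1v⟩ := Finset.mem_filter.mp hm1
              have hpair := hx ((m v) • m1 - (m1 v) • m)
                (Finset.mem_union.mpr (Or.inr (Finset.mem_image.mpr
                  ⟨(m1, m), Finset.mem_product.mpr ⟨Finset.mem_filter.mpr ⟨h1M, h1v⟩,
                    Finset.mem_filter.mpr ⟨hm, hmv⟩⟩, rfl⟩)))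
              simp only [LinearMap.sub_apply, LinearMap.smul_apply, smul_eq_mul] at hpair
              rw [show m1 x / m1 v = (-(m1 x))/(-(m1 v)) by rw [neg_div_neg_eq],
                div_le_div_iff₀ (by linarith) hmv]
              nlinarith
          have hle : t ≤ m x / m v := Finset.max'_le _ _ _ hub2
          have h2 : t * m v ≤ (m x / m v) * m v := by
            exact mul_le_mul_of_nonneg_right hle (le_of_lt hmv)
          rw [div_mul_cancel₀ _ (ne_of_gt hmv)] at h2
          simp only [map_sub, map_smul, smul_eq_mul]
          linarith
      rw [Finset.coe_insert]
      exact mem_coneHull_insert.mpr ⟨x - t • v, hmem, t, ht0, by abel⟩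


/-- The half-space cone defined by a finite set of functionals. -/
def hset (M : Finset ((V n) →ₗ[ℚ] ℚ)) : Set (V n) := {x | ∀ m ∈ M, 0 ≤ m x}

lemma hset_add {M : Finset ((V n) →ₗ[ℚ] ℚ)} {x y : V n} (hx : x ∈ hset M) (hy : y ∈ hset M) :
    x + y ∈ hset M := fun m hm => by
  rw [map_add]; exact add_nonneg (hx m hm) (hy m hm)

lemma hset_smul {M : Finset ((V n) →ₗ[ℚ] ℚ)} {r : ℚ} {x : V n} (hr : 0 ≤ r)
    (hx : x ∈ hset M) : r • x ∈ hset M := fun m hm => by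
  rw [map_smul]; exact mul_nonneg hr (hx m hm)

/-- The span of the kernels of the constraints active at `x`. -/
noncomputable def Wsub (M : Finset ((V n) →ₗ[ℚ] ℚ)) (x : V n) : Submodule ℚ (V n) :=
  ⨅ m ∈ M.filter (fun m => m x = 0), LinearMap.ker m

lemma mem_Wsub {M : Finset ((V n) →ₗ[ℚ] ℚ)} {x y : V n} :
    y ∈ Wsub M x ↔ ∀ m ∈ M, m x = 0 → m y = 0 := by
  simp [Wsub, Submodule.mem_iInf, LinearMap.mem_ker, Finset.mem_filter, and_imp]

lemma self_mem_Wsub {M : Finset ((V n) →ₗ[ℚ] ℚ)} {x : V n} : x ∈ Wsub M x :=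
  mem_Wsub.mpr fun _ _ h => h

/-- The key step: moving from `x` in the direction `w` until a new constraint becomes
active. -/
lemma hstep {M : Finset ((V n) →ₗ[ℚ] ℚ)} {x w : V n} (hx : x ∈ hset M)
    (hw : ∀ m ∈ M, m x = 0 → m w = 0)
    (hne : ∃ m ∈ M, 0 < m x ∧ m w < 0) :
    ∃ t : ℚ, 0 < t ∧ x + t • w ∈ hset M ∧
      Module.finrank ℚ (Wsub M (x + t • w)) < Module.finrank ℚ (Wsub M x) := by
  classical
  set Nn := M.filter (fun m => 0 < m x ∧ m w < 0) with hNn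
  have hNne : Nn.Nonempty := by
    obtain ⟨m, hm, h1, h2⟩ := hne
    exact ⟨m, Finset.mem_filter.mpr ⟨hm, h1, h2⟩⟩
  set t := Nn.inf' hNne (fun m => m x / (-(m w))) with ht
  have htpos : 0 < t := by
    rw [ht, Finset.lt_inf'_iff]
    intro m hm
    obtain ⟨_, h1, h2⟩ := Finset.mem_filter.mp hm
    exact div_pos h1 (by linarith)
  have hmemt : x + t • w ∈ hset M := by
    intro m hm
    rw [map_add, map_smul, smul_eq_mul]
    by_cases hmx : m x = 0
    · rw [hmx, hw m hm hmx, mul_zero, add_zero]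
    · have hmx' : 0 < m x := lt_of_le_of_ne (hx m hm) (Ne.symm hmx)
      by_cases hmw : 0 ≤ m w
      · exact add_nonneg (le_of_lt hmx') (mul_nonneg (le_of_lt htpos) hmw)
      · push_neg at hmw
        have hmn : m ∈ Nn := Finset.mem_filter.mpr ⟨hm, hmx', hmw⟩
        have hle : t ≤ m x / (-(m w)) := Finset.inf'_le _ hmn
        have h2 : t * (-(m w)) ≤ m x := (le_div_iff₀ (by linarith)).mp hle
        linarith
  obtain ⟨m₀, hm₀, hm₀eq⟩ := Finset.exists_mem_eq_inf' hNne (fun m => m x / (-(m w)))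
  obtain ⟨hm₀M, hm₀x, hm₀w⟩ := Finset.mem_filter.mp hm₀
  have hm₀z : m₀ (x + t • w) = 0 := by
    have hne0 : m₀ w ≠ 0 := ne_of_lt hm₀w
    rw [map_add, map_smul, smul_eq_mul, ht, hm₀eq]
    rw [div_mul_eq_mul_div, mul_div_assoc, div_neg, div_self hne0]
    ring
  refine ⟨t, htpos, hmemt, Submodule.finrank_lt_finrank_of_lt ?_⟩
  have hle : Wsub M (x + t • w) ≤ Wsub M x := by
    intro z hz
    rw [mem_Wsub] at hz ⊢
    intro m hm hmx
    exact hz m hm (by rw [map_add, map_smul, smul_eq_mul, hmx, hw m hm hmx, mul_zero, add_zero])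
  refine lt_of_le_of_ne hle ?_
  intro heq
  have hwin : w ∈ Wsub M x := mem_Wsub.mpr (hw)
  rw [← heq, mem_Wsub] at hwin
  exact absurd (hwin m₀ hm₀M hm₀z) (ne_of_lt hm₀w)

/-- Every element of a strongly convex H-cone lies in the cone generated by its rays. -/
lemma hset_subset_coneHull_rays (M : Finset ((V n) →ₗ[ℚ] ℚ))
    (hsc : StronglyConvex (hset M)) :
    ∀ x ∈ hset M, x ∈ coneHull (⋃₀ raysOf (hset M)) := by
  classical
  suffices H : ∀ k : ℕ, ∀ x ∈ hset M, Module.finrank ℚ (Wsub M x) < k →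
      x ∈ coneHull (⋃₀ raysOf (hset M)) by
    exact fun x hx => H (Module.finrank ℚ (Wsub M x) + 1) x hx (Nat.lt_succ_self _)
  intro k
  induction k with
  | zero => intro x _ h; omega
  | succ k ih =>
    intro x hx hk
    by_cases hx0 : x = 0
    · subst hx0; exact coneHull_zero_mem _
    by_cases hW : ∀ w, (∀ m ∈ M, m x = 0 → m w = 0) → w ∈ Submodule.span ℚ ({x} : Set (V n))
    · -- `x` lies on a ray of the cone
      set A := M.filter (fun m => m x = 0) with hA
      set mS : (V n) →ₗ[ℚ] ℚ := ∑ m ∈ A, m with hmS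
      have hmSapp : ∀ y, mS y = ∑ m ∈ A, m y := fun y => by
        rw [hmS]; simp [LinearMap.sum_apply]
      have hmSnn : ∀ y ∈ hset M, 0 ≤ mS y := by
        intro y hy
        rw [hmSapp]
        exact Finset.sum_nonneg fun m hm => hy m (Finset.mem_filter.mp hm).1
      set F : Set (V n) := {y ∈ hset M | mS y = 0} with hF
      have hface : IsFaceOf F (hset M) := ⟨mS, hmSnn, rfl⟩
      have hxF : x ∈ F := by
        refine ⟨hx, ?_⟩
        rw [hmSapp]
        exact Finset.sum_eq_zero fun m hm => (Finset.mem_filter.mp hm).2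
      have hFspan : ∀ y ∈ F, y ∈ Submodule.span ℚ ({x} : Set (V n)) := by
        rintro y ⟨hy, hy0⟩
        refine hW y ?_
        intro m hm hmx
        have hall := (Finset.sum_eq_zero_iff_of_nonneg
          (fun m' hm' => hy m' (Finset.mem_filter.mp hm').1)).mp ((hmSapp y).symm.trans hy0)
        exact hall m (Finset.mem_filter.mpr ⟨hm, hmx⟩)
      have hdim : coneDim F = 1 := by
        have h1 : Submodule.span ℚ F = Submodule.span ℚ ({x} : Set (V n)) := by
          apply le_antisymm
          · rw [Submodule.span_le]
            exact fun y hy => hFspan y hy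
          · exact Submodule.span_mono (by simpa using hxF)
        rw [coneDim, h1]
        exact finrank_span_singleton hx0
      exact subset_coneHull _ (Set.mem_sUnion.mpr ⟨F, ⟨hface, hdim⟩, hxF⟩)
    · push_neg at hW
      obtain ⟨w₀, hw₀ker, hw₀span⟩ := hW
      -- choose direction with a blocking constraint
      have hchoice : ∃ w, (∀ m ∈ M, m x = 0 → m w = 0) ∧
          w ∉ Submodule.span ℚ ({x} : Set (V n)) ∧ (∃ m ∈ M, 0 < m x ∧ m w < 0) := by
        by_cases hn : ∃ m ∈ M, 0 < m x ∧ m w₀ < 0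
        · exact ⟨w₀, hw₀ker, hw₀span, hn⟩
        by_cases hp : ∃ m ∈ M, 0 < m x ∧ 0 < m w₀
        · refine ⟨-w₀, fun m hm hmx => by rw [map_neg, hw₀ker m hm hmx, neg_zero], ?_, ?_⟩
          · intro hcon
            exact hw₀span (by simpa using Submodule.neg_mem _ hcon)
          · obtain ⟨m, hm, h1, h2⟩ := hp
            exact ⟨m, hm, h1, by rw [map_neg]; linarith⟩
        · exfalso
          push_neg at hn hp
          have hz : ∀ m ∈ M, m w₀ = 0 := by
            intro m hm
            by_cases hmx : m x = 0
            · exact hw₀ker m hm hmx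
            · have h1 : 0 < m x := lt_of_le_of_ne (hx m hm) (Ne.symm hmx)
              exact le_antisymm (hp m hm h1) (hn m hm h1)
          have h1 : w₀ ∈ hset M := fun m hm => le_of_eq (hz m hm).symm
          have h2 : -w₀ ∈ hset M := fun m hm => by rw [map_neg, hz m hm, neg_zero]
          exact hw₀span (by rw [hsc w₀ h1 h2]; exact Submodule.zero_mem _)
      obtain ⟨w, hwker, hwspan, hwne⟩ := hchoice
      obtain ⟨tp, htp, hxp, hrkp⟩ := hstep hx hwker hwne
      set xp := x + tp • w with hxpdef
      have hxpc : xp ∈ coneHull (⋃₀ raysOf (hset M)) :=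
        ih xp hxp (lt_of_lt_of_le hrkp (Nat.lt_succ_iff.mp hk))
      by_cases hp : ∃ m ∈ M, 0 < m x ∧ 0 < m w
      · -- blocked in both directions
        have hwne' : ∃ m ∈ M, 0 < m x ∧ m (-w) < 0 := by
          obtain ⟨m, hm, h1, h2⟩ := hp
          exact ⟨m, hm, h1, by rw [map_neg]; linarith⟩
        obtain ⟨tm, htm, hxm, hrkm⟩ := hstep hx
          (fun m hm hmx => by rw [map_neg, hwker m hm hmx, neg_zero]) hwne'
        set xm := x + tm • (-w) with hxmdef
        have hxmc : xm ∈ coneHull (⋃₀ raysOf (hset M)) :=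
          ih xm hxm (lt_of_lt_of_le hrkm (Nat.lt_succ_iff.mp hk))
        have hsum : tm • xp + tp • xm = (tp + tm) • x := by
          rw [hxpdef, hxmdef]; module
        have hxeq : x = ((tp + tm)⁻¹) • (tm • xp + tp • xm) := by
          rw [hsum, inv_smul_smul₀ (by positivity)]
        rw [hxeq]
        exact coneHull_smul (by positivity)
          (coneHull_add (coneHull_smul (le_of_lt htm) hxpc) (coneHull_smul (le_of_lt htp) hxmc))
      · -- `-w` is itself in the cone
        push_neg at hp
        set y := -w with hydef
        have hy : y ∈ hset M := by
          intro m hm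
          by_cases hmx : m x = 0
          · rw [hydef, map_neg, hwker m hm hmx, neg_zero]
          · have h1 : 0 < m x := lt_of_le_of_ne (hx m hm) (Ne.symm hmx)
            rw [hydef, map_neg]
            exact neg_nonneg.mpr (hp m hm h1)
        have hxdecomp : x = xp + tp • y := by
          rw [hxpdef, hydef]; module
        by_cases hact : ∃ m ∈ M, 0 < m x ∧ m y = 0
        · -- active set strictly bigger
          obtain ⟨m₁, hm₁, hm₁x, hm₁y⟩ := hact
          have hlt : Module.finrank ℚ (Wsub M y) < Module.finrank ℚ (Wsub M x) := by
            apply Submodule.finrank_lt_finrank_of_lt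
            refine lt_of_le_of_ne ?_ ?_
            · intro z hz
              rw [mem_Wsub] at hz ⊢
              intro m hm hmx
              exact hz m hm (by rw [hydef, map_neg, hwker m hm hmx, neg_zero])
            · intro heq
              have : x ∈ Wsub M y := heq ▸ self_mem_Wsub
              rw [mem_Wsub] at this
              exact absurd (this m₁ hm₁ hm₁y) (ne_of_gt hm₁x)
          have hyc : y ∈ coneHull (⋃₀ raysOf (hset M)) :=
            ih y hy (lt_of_lt_of_le hlt (Nat.lt_succ_iff.mp hk))
          rw [hxdecomp]
          exact coneHull_add hxpc (coneHull_smul (le_of_lt htp) hyc)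
        · -- same active set: shoot from y in the direction -x
          push_neg at hact
          have hiff : ∀ m ∈ M, (m x = 0 ↔ m y = 0) := by
            intro m hm
            constructor
            · intro hmx
              rw [hydef, map_neg, hwker m hm hmx, neg_zero]
            · intro hmy
              by_contra hmx
              have h1 : 0 < m x := lt_of_le_of_ne (hx m hm) (Ne.symm hmx)
              exact absurd hmy (hact m hm h1)
          have hyne : ∃ m ∈ M, 0 < m y ∧ m (-x) < 0 := by
            by_contra hcon
            push_neg at hcon
            have hz : ∀ m ∈ M, m y = 0 := by
              intro m hm
              by_cases hmy : m y = 0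
              · exact hmy
              · have h1 : 0 < m y := lt_of_le_of_ne (hy m hm) (Ne.symm hmy)
                have h2 := hcon m hm h1
                rw [map_neg, neg_nonneg] at h2
                have hmx : m x = 0 := le_antisymm h2 (hx m hm)
                exact absurd ((hiff m hm).mp hmx) hmy
            have h1 : y ∈ hset M := hy
            have h2 : -y ∈ hset M := fun m hm => by rw [map_neg, hz m hm, neg_zero]
            have := hsc y h1 h2
            rw [hydef] at this
            exact hwspan (by rw [show w = 0 from by simpa using this]; exact Submodule.zero_mem _)
          obtain ⟨t', ht', hym, hrk'⟩ := hstep hy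
            (fun m hm hmy => by rw [map_neg, (hiff m hm).mpr hmy, neg_zero]) hyne
          set ym := y + t' • (-x) with hymdef
          have hWeq : Wsub M y = Wsub M x := by
            ext z
            rw [mem_Wsub, mem_Wsub]
            exact ⟨fun h m hm hmx => h m hm ((hiff m hm).mp hmx),
              fun h m hm hmy => h m hm ((hiff m hm).mpr hmy)⟩
          have hymc : ym ∈ coneHull (⋃₀ raysOf (hset M)) := by
            refine ih ym hym ?_
            rw [hWeq] at hrk'
            exact lt_of_lt_of_le hrk' (Nat.lt_succ_iff.mp hk)
          have hkey : (1 - tp * t') • x = xp + tp • ym := by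
            rw [hxpdef, hymdef, hydef]; module
          rcases lt_trichotomy (tp * t') 1 with hlt1 | heq1 | hgt1
          · have hpos : (0:ℚ) < 1 - tp * t' := by linarith
            have : x = (1 - tp * t')⁻¹ • (xp + tp • ym) := by
              rw [← hkey, inv_smul_smul₀ (ne_of_gt hpos)]
            rw [this]
            exact coneHull_smul (le_of_lt (inv_pos.mpr hpos))
              (coneHull_add hxpc (coneHull_smul (le_of_lt htp) hymc))
          · exfalso
            have hz : xp + tp • ym = 0 := by rw [← hkey, heq1]; simp
            have hnegxp : -xp ∈ hset M := by
              rw [neg_eq_of_add_eq_zero_right hz]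
              exact hset_smul (le_of_lt htp) hym
            have hxp0 : xp = 0 := hsc xp hxp hnegxp
            rw [hxpdef] at hxp0
            apply hwspan
            rw [Submodule.mem_span_singleton]
            refine ⟨-(tp⁻¹), ?_⟩
            have h3 : -x = tp • w := neg_eq_of_add_eq_zero_right hxp0
            calc (-(tp⁻¹)) • x = tp⁻¹ • (-x) := by rw [neg_smul, smul_neg]
              _ = tp⁻¹ • (tp • w) := by rw [h3]
              _ = w := inv_smul_smul₀ (ne_of_gt htp) w
          · exfalso
            have hpos : (0:ℚ) < tp * t' - 1 := by linarith
            have hnx : -x = (tp * t' - 1)⁻¹ • (xp + tp • ym) := by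
              have h1 : (tp * t' - 1) • (-x) = xp + tp • ym := by
                rw [← hkey]; module
              rw [← h1, inv_smul_smul₀ (ne_of_gt hpos)]
            have hnxh : -x ∈ hset M := by
              rw [hnx]
              exact hset_smul (le_of_lt (inv_pos.mpr hpos))
                (hset_add hxp (hset_smul (le_of_lt htp) hym))
            exact hx0 (hsc x hx hnxh)


lemma IsFaceOf.subset {F σ : Set (V n)} (h : IsFaceOf F σ) : F ⊆ σ := by
  obtain ⟨m, _, rfl⟩ := h
  exact fun x hx => hx.1

lemma isFaceOf_self (σ : Set (V n)) : IsFaceOf σ σ :=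
  ⟨0, by simp, by ext x; simp⟩

lemma isFaceOf_restrict {ν ζ σ : Set (V n)} (hν : IsFaceOf ν σ) (h1 : ν ⊆ ζ) (h2 : ζ ⊆ σ) :
    IsFaceOf ν ζ := by
  obtain ⟨m, hm, hν⟩ := hν
  refine ⟨m, fun x hx => hm x (h2 hx), ?_⟩
  ext x
  constructor
  · intro hx
    refine ⟨h1 hx, ?_⟩
    rw [hν] at hx
    exact hx.2
  · rintro ⟨hx, hmx⟩
    rw [hν]
    exact ⟨h2 hx, hmx⟩

/-- Transitivity of faces for polyhedral cones. -/
lemma isFaceOf_trans {G F σ : Set (V n)} (hpoly : IsPolyCone σ) (hF : IsFaceOf F σ)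
    (hG : IsFaceOf G F) : IsFaceOf G σ := by
  classical
  obtain ⟨S, rfl⟩ := hpoly
  obtain ⟨mF, hmF, hFdef⟩ := hF
  obtain ⟨mG, hmG, hGdef⟩ := hG
  set T : Finset ℚ := insert 0 ((S.filter (fun v => 0 < mF v)).image
    (fun v => -(mG v) / mF v)) with hT
  have hTne : T.Nonempty := Finset.insert_nonempty _ _
  set N : ℚ := T.max' hTne + 1 with hN
  have hNbig : ∀ v ∈ S, 0 < mF v → 0 < N * mF v + mG v := by
    intro v hv hvF
    have h1 : -(mG v) / mF v ≤ T.max' hTne := by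
      apply Finset.le_max'
      rw [hT]
      exact Finset.mem_insert_of_mem (Finset.mem_image_of_mem _ (Finset.mem_filter.mpr ⟨hv, hvF⟩))
    have h2 : -(mG v) / mF v < N := by rw [hN]; linarith
    have h3 : -(mG v) < N * mF v := by
      have := (div_lt_iff₀ hvF).mp h2
      linarith
    linarith
  set m : (V n) →ₗ[ℚ] ℚ := N • mF + mG with hm
  have hmapp : ∀ x, m x = N * mF x + mG x := fun x => by
    rw [hm]; simp
  have hgen : ∀ v ∈ S, 0 ≤ m v ∧ (mF v = 0 → mG v = 0 → m v = 0) ∧ (m v = 0 → mF v = 0 ∧ mG v = 0) := by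
    intro v hv
    have hvσ : v ∈ coneHull (S : Set (V n)) := subset_coneHull _ hv
    have hvF0 : 0 ≤ mF v := hmF v hvσ
    rcases eq_or_lt_of_le hvF0 with heq | hlt
    · have hvF : v ∈ F := by rw [hFdef]; exact ⟨hvσ, heq.symm⟩
      have hvG : 0 ≤ mG v := hmG v hvF
      refine ⟨by rw [hmapp, ← heq]; linarith, fun _ h => by rw [hmapp, ← heq, h]; ring,
        fun h => ⟨heq.symm, by rw [hmapp, ← heq] at h; linarith⟩⟩
    · have := hNbig v hv hlt
      refine ⟨by rw [hmapp]; linarith, fun h => absurd h.symm (ne_of_lt hlt), 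
        fun h => absurd h (by rw [hmapp]; linarith)⟩
  have hmnn : ∀ x ∈ coneHull (S : Set (V n)), 0 ≤ m x :=
    linear_nonneg_coneHull (fun v hv => (hgen v hv).1)
  refine ⟨m, hmnn, ?_⟩
  ext x
  constructor
  · intro hx
    rw [hGdef] at hx
    obtain ⟨hxF, hxG⟩ := hx
    rw [hFdef] at hxF
    exact ⟨hxF.1, by rw [hmapp, hxF.2, hxG]; ring⟩
  · rintro ⟨hx, hmx⟩
    obtain ⟨s, hs, c, hc, rfl⟩ := hx
    have hterm : ∀ v ∈ s, c v * m v = 0 := by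
      have hsum : ∑ v ∈ s, c v * m v = 0 := by
        rw [← hmx, map_sum]
        exact Finset.sum_congr rfl fun v hv => by rw [map_smul, smul_eq_mul]
      intro v hv
      have hnn : ∀ u ∈ s, 0 ≤ c u * m u := fun u hu =>
        mul_nonneg (hc u hu) (hgen u (hs hu)).1
      exact (Finset.sum_eq_zero_iff_of_nonneg hnn).mp hsum v hv
    have hFterm : ∀ v ∈ s, c v * mF v = 0 ∧ c v * mG v = 0 := by
      intro v hv
      rcases mul_eq_zero.mp (hterm v hv) with h | h
      · exact ⟨by rw [h, zero_mul], by rw [h, zero_mul]⟩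
      · obtain ⟨h1, h2⟩ := (hgen v (hs hv)).2.2 h
        exact ⟨by rw [h1, mul_zero], by rw [h2, mul_zero]⟩
    have hxs : ∑ v ∈ s, c v • v ∈ coneHull (S : Set (V n)) := ⟨s, hs, c, hc, rfl⟩
    have hF0 : mF (∑ v ∈ s, c v • v) = 0 := by
      rw [map_sum]
      exact Finset.sum_eq_zero fun v hv => by
        rw [map_smul, smul_eq_mul]; exact (hFterm v hv).1
    have hG0 : mG (∑ v ∈ s, c v • v) = 0 := by
      rw [map_sum]
      exact Finset.sum_eq_zero fun v hv => by
        rw [map_smul, smul_eq_mul]; exact (hFterm v hv).2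
    rw [hGdef]
    refine ⟨?_, hG0⟩
    rw [hFdef]
    exact ⟨hxs, hF0⟩

/-- A strongly convex polyhedral cone is contained in the cone generated by its rays. -/
lemma polyCone_subset_coneHull_rays {σ : Set (V n)} (hpoly : IsPolyCone σ)
    (hsc : StronglyConvex σ) : σ ⊆ coneHull (⋃₀ raysOf σ) := by
  obtain ⟨S, rfl⟩ := hpoly
  obtain ⟨M, hM⟩ := weyl S
  rw [hM] at hsc ⊢
  exact fun x hx => hset_subset_coneHull_rays M hsc x hx

lemma ray_exists_nonzero {ν : Set (V n)} (h : coneDim ν = 1) : ∃ x ∈ ν, x ≠ 0 := by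
  by_contra hcon
  push_neg at hcon
  have : Submodule.span ℚ ν = ⊥ := Submodule.span_eq_bot.mpr hcon
  rw [coneDim, this] at h
  simp at h

lemma ray_subset_span {ν : Set (V n)} {x : V n} (h : coneDim ν = 1) (hx : x ∈ ν)
    (hx0 : x ≠ 0) : ∀ y ∈ ν, ∃ t : ℚ, y = t • x := by
  have h1 : Submodule.span ℚ ({x} : Set (V n)) ≤ Submodule.span ℚ ν :=
    Submodule.span_mono (Set.singleton_subset_iff.mpr hx)
  have h2 : Submodule.span ℚ ν = Submodule.span ℚ ({x} : Set (V n)) := by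
    apply (Submodule.eq_of_le_of_finrank_le h1 ?_).symm
    rw [finrank_span_singleton hx0]
    rw [coneDim] at h
    omega
  intro y hy
  have : y ∈ Submodule.span ℚ ({x} : Set (V n)) := h2 ▸ Submodule.subset_span hy
  obtain ⟨t, ht⟩ := Submodule.mem_span_singleton.mp this
  exact ⟨t, ht.symm⟩

end Aux

/-- A fan quadruple is partially-sorted iff every `(B ∪ H)`-unsettled cone `ξ`
has a face `ζ` whose rays are exactly the rays of `ξ` lying in `𝔄` (the distinguished face). -/
theorem partiallySorted_iff_distinguished_face {n : ℕ} (X B C H : Set (Set (V n)))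
    (hFan : IsFan X) (hQ : IsQuadData X B C H) :
    PartiallySortedOn X B C H ↔
      ∀ ξ ∈ X, Unsettled (B ∪ H) ξ →
        ∃ ζ, IsFaceOf ζ ξ ∧ {ν | IsRayOf ν ξ ∧ ν ∉ B ∪ C ∪ H} = raysOf ζ := by
  obtain ⟨hfin, hcones, hfacecl, hint⟩ := hFan
  constructor
  · -- forward direction
    intro hps ξ hξ hun
    have hun' : Unsettled ((B \ ∅) ∪ (H \ ∅)) ξ := by
      simpa [Set.diff_empty] using hun
    obtain ⟨ρ, ⟨hρB, hρC, hρA⟩, hρstrict⟩ := hps ξ hξ hun'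
    obtain ⟨hpoly, hsc⟩ := hcones ξ hξ
    have hray_nonpos : ∀ ν ∈ raysOf ξ, ∀ x ∈ ν, ρ x ≤ 0 := by
      intro ν hν x hx
      by_cases hCν : ν ∈ C
      · exact hρC ν hν hCν x hx
      · have hBν : ν ∉ B := fun h => hun ν hν (Set.mem_union_left _ h)
        have hHν : ν ∉ H := fun h => hun ν hν (Set.mem_union_right _ h)
        exact le_of_eq (hρA ν hν hBν hCν hHν x hx)
    have hρneg : ∀ x ∈ ξ, ρ x ≤ 0 := by
      intro x hx
      refine linear_nonpos_coneHull ?_ x (polyCone_subset_coneHull_rays hpoly hsc hx)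
      rintro a ⟨ν, hν, haν⟩
      exact hray_nonpos ν hν a haν
    set ζ : Set (V n) := {x ∈ ξ | (-ρ) x = 0} with hζdef
    have hζface : IsFaceOf ζ ξ := ⟨-ρ, fun x hx => by
      simpa using hρneg x hx, rfl⟩
    have hζsub : ζ ⊆ ξ := hζface.subset
    refine ⟨ζ, hζface, ?_⟩
    ext ν
    constructor
    · rintro ⟨hνray, hνnot⟩
      obtain ⟨hνface, hνdim⟩ := hνray
      have hνB : ν ∉ B := fun h => hνnot (Set.mem_union_left _ (Set.mem_union_left _ h))
      have hνC : ν ∉ C := fun h => hνnot (Set.mem_union_left _ (Set.mem_union_right _ h))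
      have hνH : ν ∉ H := fun h => hνnot (Set.mem_union_right _ h)
      have hzero : ∀ x ∈ ν, ρ x = 0 := hρA ν ⟨hνface, hνdim⟩ hνB hνC hνH
      have hsub : ν ⊆ ζ := fun x hx =>
        ⟨hνface.subset hx, by simp [hzero x hx]⟩
      exact ⟨isFaceOf_restrict hνface hsub hζsub, hνdim⟩
    · rintro ⟨hνface, hνdim⟩
      have hνξ : IsRayOf ν ξ := ⟨isFaceOf_trans hpoly hζface hνface, hνdim⟩
      refine ⟨hνξ, ?_⟩
      intro hmem
      rcases hmem with hBC | hHν
      · rcases hBC with hBν | hCν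
        · exact hun ν hνξ (Set.mem_union_left _ hBν)
        · obtain ⟨x, hxν, hx0⟩ := ray_exists_nonzero hνdim
          have h1 : ρ x < 0 := hρstrict ν hνξ hCν x hxν hx0
          have h2 : x ∈ ζ := hνface.subset hxν
          rw [hζdef] at h2
          have : ρ x = 0 := by simpa using h2.2
          linarith
      · exact hun ν hνξ (Set.mem_union_right _ hHν)
  · -- backward direction
    intro hdist ξ hξ hun
    have hun' : Unsettled (B ∪ H) ξ := by
      simpa [Set.diff_empty] using hun
    obtain ⟨ζ, hζface, hrays⟩ := hdist ξ hξ hun'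
    obtain ⟨m, hm, hζdef⟩ := hζface
    have hζsub : ζ ⊆ ξ := by
      rw [hζdef]; exact fun x hx => hx.1
    refine ⟨-m, ⟨?_, ?_, ?_⟩, ?_⟩
    · intro ν hν hBν
      exact absurd (Set.mem_union_left _ hBν) (hun' ν hν)
    · intro ν hν _ x hx
      have hxξ : x ∈ ξ := hν.1.subset hx
      simpa using hm x hxξ
    · intro ν hν hBν hCν hHν x hx
      have hνζ : ν ∈ raysOf ζ := by
        rw [← hrays]
        refine ⟨hν, ?_⟩
        intro hmem
        rcases hmem with hBC | h
        · rcases hBC with h | h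
          · exact hBν h
          · exact hCν h
        · exact hHν h
      have hxζ : x ∈ ζ := hνζ.1.subset hx
      rw [hζdef] at hxζ
      simp [hxζ.2]
    · intro ν hν hCν x hx hx0
      have hxξ : x ∈ ξ := hν.1.subset hx
      have hge : 0 ≤ m x := hm x hxξ
      rcases eq_or_lt_of_le hge with heq | hlt
      · exfalso
        have hspan := ray_subset_span hν.2 hx hx0
        have hνζ : ν ⊆ ζ := by
          intro y hy
          obtain ⟨t, rfl⟩ := hspan y hy
          rw [hζdef]
          refine ⟨hν.1.subset hy, ?_⟩
          rw [map_smul, smul_eq_mul, ← heq, mul_zero]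
        have hνray : ν ∈ raysOf ζ := ⟨isFaceOf_restrict hν.1 hνζ hζsub, hν.2⟩
        rw [← hrays] at hνray
        exact hνray.2 (Set.mem_union_left _ (Set.mem_union_right _ hCν))
      · simpa using hlt


end ToricPaper
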